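/- Let Λ ∈ M_n^d (downward closed of cardinality n), let u ∈ L²(Γ, dρ), and let w_n be the discrete least-squares minimizer over the optimized set Λ_m^opt. Then for any v ∈ P_Λ, one has ‖u − w_n‖ ≤ ‖u − v‖ + 2 √(C_{2n−1}^d) ‖u − v‖_m, where C_{2n−1}^d := max over downward closed Λ' of cardinality 2n−1 of max_{w ∈ P_{Λ'}} ‖w‖²/‖w‖_m². -/

import Mathlib

/-!
Write `v - w = (u - w) - (u - v)`. Since `Λ ∪ Λ_m^opt` is downward closed of cardinality at
most `2n - 1` (both sets contain `0`), it extends to a downward closed `Λ'` of cardinality exactly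
`2n - 1` with `v - w ∈ P_{Λ'}`, so `‖v - w‖ ≤ √C ‖v - w‖_m`. By optimality of `w` over `Λ`,
`‖v - w‖_m ≤ ‖u - w‖_m + ‖u - v‖_m ≤ 2 ‖u - v‖_m`, and the triangle inequality
`‖u - w‖ ≤ ‖u - v‖ + ‖v - w‖` concludes.
-/

open MeasureTheory

def DownwardClosed {d : ℕ} (Λ : Finset (Fin d → ℕ)) : Prop :=
  ∀ ν ∈ Λ, ∀ μ : Fin d → ℕ, μ ≤ ν → μ ∈ Λ

/-- The polynomial space `P_Λ = span{y ↦ y^ν : ν ∈ Λ}`. -/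
noncomputable def polySpace {d : ℕ} (Λ : Finset (Fin d → ℕ)) :
    Submodule ℝ ((Fin d → ℝ) → ℝ) :=
  Submodule.span ℝ {f | ∃ ν ∈ Λ, f = fun y => ∏ j, y j ^ ν j}

/-- The `L²(Γ,dρ)` norm `‖f‖ = (∫ f² dρ)^{1/2}`. -/
noncomputable def L2norm {d : ℕ} (ρ : Measure (Fin d → ℝ)) (f : (Fin d → ℝ) → ℝ) : ℝ :=
  Real.sqrt (∫ y, f y ^ 2 ∂ρ)

/-- The empirical (semi)norm `‖f‖_m = ((1/m) ∑ᵢ f(yⁱ)²)^{1/2}`. -/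
noncomputable def empNorm {d m : ℕ} (y : Fin m → (Fin d → ℝ)) (f : (Fin d → ℝ) → ℝ) : ℝ :=
  Real.sqrt ((∑ i, f (y i) ^ 2) / m)

namespace DownwardClosed

variable {d : ℕ} {Λ Λ' : Finset (Fin d → ℕ)}

lemma zero_mem (hΛ : DownwardClosed Λ) (hne : Λ.Nonempty) : (0 : Fin d → ℕ) ∈ Λ :=
  let ⟨ν, hν⟩ := hne
  hΛ ν hν 0 fun j => Nat.zero_le (ν j)

lemma union (hΛ : DownwardClosed Λ) (hΛ' : DownwardClosed Λ') : DownwardClosed (Λ ∪ Λ') := by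
  intro ν hν μ hμ
  rcases Finset.mem_union.mp hν with h | h
  · exact Finset.mem_union_left _ (hΛ ν h μ hμ)
  · exact Finset.mem_union_right _ (hΛ' ν h μ hμ)

lemma card_union_le (hΛ : DownwardClosed Λ) (hΛ' : DownwardClosed Λ') {n : ℕ}
    (hc : Λ.card = n) (hc' : Λ'.card = n) : (Λ ∪ Λ').card ≤ 2 * n - 1 := by
  classical
  rcases Nat.eq_zero_or_pos n with rfl | hn
  · simp_all
  have hzero : (0 : Fin d → ℕ) ∈ Λ ∩ Λ' := Finset.mem_inter.mpr
    ⟨hΛ.zero_mem (Finset.card_pos.mp (hc ▸ hn)), hΛ'.zero_mem (Finset.card_pos.mp (hc' ▸ hn))⟩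
  have hincl_excl := Finset.card_union_add_card_inter Λ Λ'
  have hinter : 0 < (Λ ∩ Λ').card := Finset.card_pos.mpr ⟨_, hzero⟩
  omega

/-- A `≤`-minimal multi-index outside `Λ` can be added without breaking downward closedness. -/
lemma exists_insert (hd : 0 < d) (hΛ : DownwardClosed Λ) :
    ∃ ν ∉ Λ, DownwardClosed (insert ν Λ) := by
  have : Nonempty (Fin d) := ⟨⟨0, hd⟩⟩
  obtain ⟨ν, hνΛ, hmin⟩ := wellFounded_lt.has_min _ (Λ.finite_toSet.infinite_compl.nonempty)
  refine ⟨ν, hνΛ, fun κ hκ μ hμ => ?_⟩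
  rcases Finset.mem_insert.mp hκ with rfl | hκ
  · rcases hμ.lt_or_eq with hlt | rfl
    · exact Finset.mem_insert_of_mem (not_not.mp fun h => hmin μ h hlt)
    · exact Finset.mem_insert_self _ _
  · exact Finset.mem_insert_of_mem (hΛ κ hκ μ hμ)

lemma exists_superset_card_eq (hd : 0 < d) (hΛ : DownwardClosed Λ) {N : ℕ}
    (hN : Λ.card ≤ N) : ∃ Λ', DownwardClosed Λ' ∧ Λ ⊆ Λ' ∧ Λ'.card = N := by
  induction N, hN using Nat.le_induction with
  | base => exact ⟨Λ, hΛ, subset_rfl, rfl⟩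
  | succ N _ ih =>
    obtain ⟨Λ', hΛ', hsub, hcard⟩ := ih
    obtain ⟨ν, hν, hins⟩ := hΛ'.exists_insert hd
    exact ⟨insert ν Λ', hins, hsub.trans (Finset.subset_insert _ _),
      by rw [Finset.card_insert_of_notMem hν, hcard]⟩

end DownwardClosed

lemma polySpace_mono {d : ℕ} {Λ Λ' : Finset (Fin d → ℕ)} (h : Λ ⊆ Λ') :
    polySpace Λ ≤ polySpace Λ' :=
  Submodule.span_mono fun _ ⟨ν, hν, hf⟩ => ⟨ν, h hν, hf⟩

/-- Monomials are bounded by `1` on `Γ = [-1, 1]^d`, hence in `L²` for a finite measure. -/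
lemma memLp_two_of_mem_polySpace {d : ℕ} {ρ : Measure (Fin d → ℝ)} [IsFiniteMeasure ρ]
    (hsupp : ∀ᵐ z ∂ρ, ∀ j, |z j| ≤ 1) {Λ : Finset (Fin d → ℕ)} {p : (Fin d → ℝ) → ℝ}
    (hp : p ∈ polySpace Λ) : MemLp p 2 ρ := by
  induction hp using Submodule.span_induction with
  | mem f hf =>
    obtain ⟨ν, -, rfl⟩ := hf
    refine MemLp.of_bound (continuous_finsetProd _ fun j _ =>
      (continuous_apply j).pow (ν j)).aestronglyMeasurable 1 ?_
    filter_upwards [hsupp] with z hz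
    rw [Real.norm_eq_abs, Finset.abs_prod]
    exact Finset.prod_le_one (fun j _ => abs_nonneg _)
      fun j _ => (abs_pow (z j) (ν j)).symm ▸ pow_le_one₀ (abs_nonneg _) (hz j)
  | zero => exact MemLp.zero
  | add f g _ _ hf hg => exact hf.add hg
  | smul c f _ hf => exact hf.const_smul c

section L2norm

variable {d : ℕ} {ρ : Measure (Fin d → ℝ)}

lemma L2norm_eq_norm_toLp {f : (Fin d → ℝ) → ℝ} (hf : MemLp f 2 ρ) :
    L2norm ρ f = ‖hf.toLp f‖ := by
  rw [Lp.norm_toLp, hf.eLpNorm_eq_integral_rpow_norm two_ne_zero ENNReal.ofNat_ne_top,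
    ENNReal.toReal_ofReal (by positivity), L2norm, Real.sqrt_eq_rpow]
  simp only [ENNReal.toReal_ofNat, Real.rpow_two, Real.norm_eq_abs, sq_abs]
  norm_num

lemma L2norm_sub_le {f g h : (Fin d → ℝ) → ℝ} (hf : MemLp f 2 ρ) (hg : MemLp g 2 ρ)
    (hh : MemLp h 2 ρ) : L2norm ρ (f - h) ≤ L2norm ρ (f - g) + L2norm ρ (g - h) := by
  rw [L2norm_eq_norm_toLp (hf.sub hh), L2norm_eq_norm_toLp (hf.sub hg),
    L2norm_eq_norm_toLp (hg.sub hh), hf.toLp_sub hh, hf.toLp_sub hg, hg.toLp_sub hh]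
  exact norm_sub_le_norm_sub_add_norm_sub _ _ _

end L2norm

section empNorm

variable {d m : ℕ} (y : Fin m → (Fin d → ℝ))

lemma empNorm_eq_norm (f : (Fin d → ℝ) → ℝ) :
    empNorm y f = ‖WithLp.toLp 2 (fun i => f (y i))‖ / Real.sqrt m := by
  rw [EuclideanSpace.norm_eq, empNorm, Real.sqrt_div' _ (Nat.cast_nonneg m)]
  simp only [Real.norm_eq_abs, sq_abs]

lemma empNorm_sub_comm (f g : (Fin d → ℝ) → ℝ) : empNorm y (f - g) = empNorm y (g - f) := by
  simp only [empNorm_eq_norm, Pi.sub_apply]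
  rw [← norm_neg, ← WithLp.toLp_neg]
  simp only [Pi.neg_def, neg_sub]

lemma empNorm_sub_le (f g h : (Fin d → ℝ) → ℝ) :
    empNorm y (f - h) ≤ empNorm y (f - g) + empNorm y (g - h) := by
  simp only [empNorm_eq_norm, Pi.sub_apply, ← add_div]
  gcongr
  have hsplit : (fun i => f (y i) - h (y i)) =
      (fun i => f (y i) - g (y i)) + fun i => g (y i) - h (y i) := by
    funext i; simp only [Pi.add_apply, sub_add_sub_cancel]
  rw [hsplit, WithLp.toLp_add]
  exact norm_add_le _ _

end empNorm

lemma le_sqrt_mul_of_sq_le_mul_sq {a b C : ℝ} (hb : 0 ≤ b) (h : a ^ 2 ≤ C * b ^ 2) :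
    a ≤ Real.sqrt C * b :=
  calc a ≤ |a| := le_abs_self a
    _ = Real.sqrt (a ^ 2) := (Real.sqrt_sq_eq_abs a).symm
    _ ≤ Real.sqrt (C * b ^ 2) := Real.sqrt_le_sqrt h
    _ = Real.sqrt C * b := by rw [Real.sqrt_mul' C (sq_nonneg b), Real.sqrt_sq hb]

theorem optimized_ls_comparison_general (d n m : ℕ) (hd : 1 ≤ d)
    (ρ : Measure (Fin d → ℝ)) [IsProbabilityMeasure ρ]
    (hsupp : ∀ᵐ z ∂ρ, ∀ j, |z j| ≤ 1)
    (u : (Fin d → ℝ) → ℝ) (hu : MemLp u 2 ρ)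
    (y : Fin m → (Fin d → ℝ))
    (C : ℝ)
    (hC : ∀ Λ' : Finset (Fin d → ℕ), DownwardClosed Λ' → Λ'.card = 2 * n - 1 →
      ∀ p ∈ polySpace Λ', (L2norm ρ p) ^ 2 ≤ C * (empNorm y p) ^ 2)
    (Λopt : Finset (Fin d → ℕ)) (hΛopt : DownwardClosed Λopt) (hcopt : Λopt.card = n)
    (w : (Fin d → ℝ) → ℝ) (hw : w ∈ polySpace Λopt)
    (hwmin : ∀ Λ' : Finset (Fin d → ℕ), DownwardClosed Λ' → Λ'.card = n →
      ∀ v' ∈ polySpace Λ', empNorm y (u - w) ≤ empNorm y (u - v'))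
    (Λ : Finset (Fin d → ℕ)) (hΛ : DownwardClosed Λ) (hc : Λ.card = n)
    (v : (Fin d → ℝ) → ℝ) (hv : v ∈ polySpace Λ) :
    L2norm ρ (u - w) ≤ L2norm ρ (u - v) + 2 * Real.sqrt C * empNorm y (u - v) := by
  obtain ⟨Λ', hΛ', hsub, hcard⟩ :=
    (hΛ.union hΛopt).exists_superset_card_eq hd (hΛ.card_union_le hΛopt hc hcopt)
  have hvw : v - w ∈ polySpace Λ' := sub_mem
    (polySpace_mono (Finset.union_subset_left hsub) hv)
    (polySpace_mono (Finset.union_subset_right hsub) hw)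
  have hL2 : L2norm ρ (v - w) ≤ Real.sqrt C * empNorm y (v - w) :=
    le_sqrt_mul_of_sq_le_mul_sq (Real.sqrt_nonneg _) (hC Λ' hΛ' hcard _ hvw)
  have hemp : empNorm y (v - w) ≤ 2 * empNorm y (u - v) := by
    have := empNorm_sub_le y v u w
    rw [empNorm_sub_comm y v u] at this
    linarith [hwmin Λ hΛ hc v hv]
  calc L2norm ρ (u - w) ≤ L2norm ρ (u - v) + L2norm ρ (v - w) := L2norm_sub_le hu
        (memLp_two_of_mem_polySpace hsupp hv) (memLp_two_of_mem_polySpace hsupp hw)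
    _ ≤ L2norm ρ (u - v) + Real.sqrt C * (2 * empNorm y (u - v)) := by
        gcongr
        exact hL2.trans (mul_le_mul_of_nonneg_left hemp (Real.sqrt_nonneg C))
    _ = L2norm ρ (u - v) + 2 * Real.sqrt C * empNorm y (u - v) := by ring

/-- Comparison lemma: if `w` is the discrete least-squares minimizer over the
sample-optimized downward closed set of cardinality `n`, then for any downward closed
`Λ` of cardinality `n` and any `v ∈ P_Λ`,
`‖u − w‖ ≤ ‖u − v‖ + 2 √(C_{2n−1}^d) ‖u − v‖_m`. -/
theorem optimized_ls_comparison (d n m : ℕ) (hd : 1 ≤ d) (hn : 1 ≤ n) (hm : 1 ≤ m)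
    (ρ : Measure (Fin d → ℝ)) [IsProbabilityMeasure ρ]
    (hsupp : ∀ᵐ z ∂ρ, ∀ j, |z j| ≤ 1)
    (u : (Fin d → ℝ) → ℝ) (hu : MemLp u 2 ρ)
    (y : Fin m → (Fin d → ℝ))
    (C : ℝ) (hC0 : 0 ≤ C)
    (hC : ∀ Λ' : Finset (Fin d → ℕ), DownwardClosed Λ' → Λ'.card = 2 * n - 1 →
      ∀ p ∈ polySpace Λ', (L2norm ρ p) ^ 2 ≤ C * (empNorm y p) ^ 2)
    (Λopt : Finset (Fin d → ℕ)) (hΛopt : DownwardClosed Λopt) (hcopt : Λopt.card = n)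
    (w : (Fin d → ℝ) → ℝ) (hw : w ∈ polySpace Λopt)
    (hwmin : ∀ Λ' : Finset (Fin d → ℕ), DownwardClosed Λ' → Λ'.card = n →
      ∀ v' ∈ polySpace Λ', empNorm y (u - w) ≤ empNorm y (u - v'))
    (Λ : Finset (Fin d → ℕ)) (hΛ : DownwardClosed Λ) (hc : Λ.card = n)
    (v : (Fin d → ℝ) → ℝ) (hv : v ∈ polySpace Λ) :
    L2norm ρ (u - w) ≤ L2norm ρ (u - v) + 2 * Real.sqrt C * empNorm y (u - v) :=
  optimized_ls_comparison_general d n m hd ρ hsupp u hu y C hC Λopt hΛopt hcopt w hw hwmin Λ hΛ hc v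
    hv
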